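/- arXiv:2107.11615 — 5 statements merged into one kernel-verified Lean document; each statement's English description precedes it below -/
import Mathlib

section
/- Let V be a real vector space, Δ ⊆ V a finite linearly independent subset, and J ⊆ Δ. For x ∈ V write x − ℕJ = {x − ν : ν a nonnegative integer combination of elements of J}, and similarly x − ℕΔ. Let λ, μ ∈ V and let f, g be finitely supported functions V → ℤ (elements of the additive monoid algebra ℤ[V]) such that the support of f is contained in λ − ℕΔ and the support of g is contained in μ − ℕΔ. For a subset S ⊆ V, let f|_S denote the function agreeing with f on S and vanishing off S. Then, with * denoting convolution (multiplication in ℤ[V]), one has (f * g)|_{(λ+μ) − ℕJ} = (f|_{λ − ℕJ}) * (g|_{μ − ℕJ}). -/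
open Classical in
/-- The restriction `f|_S` of `f ∈ ℤ[V]` to a subset `S ⊆ V`: the finitely supported
function agreeing with `f` on `S` and vanishing off `S`. -/
noncomputable def AddMonoidAlgebra.restrictSupport {V : Type*} [AddCommGroup V]
    (S : Set V) (f : AddMonoidAlgebra ℤ V) : AddMonoidAlgebra ℤ V :=
  AddMonoidAlgebra.ofCoeff (Finsupp.filter (· ∈ S) f.coeff)


open Classical in
lemma key_split {V : Type*} [AddCommGroup V] [Module ℝ V]
    (Δ : Finset V) (hΔ : LinearIndependent ℝ (fun x : (Δ : Set V) => (x : V)))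
    (J : Set V) (hJ : J ⊆ Δ) {p q : V}
    (hp : p ∈ AddSubmonoid.closure (Δ : Set V))
    (hq : q ∈ AddSubmonoid.closure (Δ : Set V))
    (hpq : p + q ∈ AddSubmonoid.closure J) :
    p ∈ AddSubmonoid.closure J ∧ q ∈ AddSubmonoid.closure J := by
  simp only [← Submodule.span_nat_eq_addSubmonoidClosure,
    Submodule.mem_toAddSubmonoid] at hp hq hpq ⊢
  obtain ⟨cp, hcp, hcps⟩ := Submodule.mem_span_set.mp hp
  obtain ⟨cq, hcq, hcqs⟩ := Submodule.mem_span_set.mp hq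
  obtain ⟨c, hc, hcs⟩ := Submodule.mem_span_set.mp hpq
  set e : (V →₀ ℕ) → (V →₀ ℝ) := fun c => c.mapRange (Nat.cast) Nat.cast_zero with he
  have hsum : ∀ cc : V →₀ ℕ, Finsupp.linearCombination ℝ (id : V → V) (e cc)
      = cc.sum (fun i n => n • i) := by
    intro cc
    rw [Finsupp.linearCombination_apply, he]
    rw [Finsupp.sum_mapRange_index (by simp)]
    exact Finsupp.sum_congr fun i _ => by simp [Nat.cast_smul_eq_nsmul]
  have hesupp : ∀ cc : V →₀ ℕ, (e cc).support ⊆ cc.support :=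
    fun cc => Finsupp.support_mapRange
  have hl : e cp + e cq - e c = 0 := by
    apply (linearIndepOn_iff (v := id) (s := (Δ : Set V))).mp hΔ
    · rw [Finsupp.mem_supported]
      intro d hd
      have hd' : d ∈ ((e cp).support ∪ (e cq).support) ∪ (e c).support :=
        (Finsupp.support_sub).trans
          (Finset.union_subset_union Finsupp.support_add (le_refl _)) hd
      simp only [Finset.mem_union] at hd'
      rcases hd' with (hd' | hd') | hd'
      · exact hcp (hesupp cp hd')
      · exact hcq (hesupp cq hd')
      · exact hJ (hc (hesupp c hd'))
    · simp only [map_sub, map_add, hsum, hcps, hcqs, hcs]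
      abel
  have heq : ∀ d : V, d ∉ J → cp d = 0 ∧ cq d = 0 := by
    intro d hd
    have hc0 : c d = 0 := Finsupp.notMem_support_iff.mp (fun h => hd (hc h))
    have := congrFun (congrArg (DFunLike.coe) hl) d
    simp only [Finsupp.sub_apply, Finsupp.add_apply, Finsupp.zero_apply, he,
      Finsupp.mapRange_apply, hc0, Nat.cast_zero, sub_zero] at this
    have h2 := (add_eq_zero_iff_of_nonneg (Nat.cast_nonneg (cp d))
      (Nat.cast_nonneg (cq d))).mp this
    exact ⟨Nat.cast_eq_zero.mp h2.1, Nat.cast_eq_zero.mp h2.2⟩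
  constructor
  · exact Submodule.mem_span_set.mpr ⟨cp, fun d hd => by
      by_contra hdJ; exact Finsupp.mem_support_iff.mp hd (heq d hdJ).1, hcps⟩
  · exact Submodule.mem_span_set.mpr ⟨cq, fun d hd => by
      by_contra hdJ; exact Finsupp.mem_support_iff.mp hd (heq d hdJ).2, hcqs⟩

open Classical in
lemma restrictSupport_mul_eq_zero {V : Type*} [AddCommGroup V] (S : Set V)
    (a b : AddMonoidAlgebra ℤ V)
    (h : ∀ x ∈ a.coeff.support, ∀ y ∈ b.coeff.support, x + y ∉ S) :
    AddMonoidAlgebra.restrictSupport S (a * b) = 0 := by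
  rw [AddMonoidAlgebra.restrictSupport, AddMonoidAlgebra.ofCoeff_eq_zero, Finsupp.filter_eq_zero_iff]
  intro z hz
  by_contra h0
  have hz' : z ∈ (a * b).coeff.support := Finsupp.mem_support_iff.mpr h0
  obtain ⟨x, hx, y, hy, hxy⟩ := Finset.mem_add.mp (AddMonoidAlgebra.support_coeff_mul_subset a b hz')
  exact h x hx y hy (hxy ▸ hz)

open Classical in
lemma restrictSupport_mul_eq_self {V : Type*} [AddCommGroup V] (S : Set V)
    (a : AddMonoidAlgebra ℤ V) (h : ∀ x ∈ a.coeff.support, x ∈ S) :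
    AddMonoidAlgebra.restrictSupport S a = a := by
  rw [AddMonoidAlgebra.restrictSupport, ← AddMonoidAlgebra.coeff_inj, AddMonoidAlgebra.coeff_ofCoeff,
    Finsupp.filter_eq_self_iff]
  exact fun x hx => h x (Finsupp.mem_support_iff.mpr hx)

/-- Character-level form of Proposition 2.2(a).  Let `Δ` be a finite linearly
independent subset of a real vector space `V` and `J ⊆ Δ`.  If `f, g ∈ ℤ[V]`
(the additive monoid algebra of `V` over `ℤ`, i.e. finitely supported `ℤ`-valued
functions on `V` under convolution) have supports contained in `λ - ℕΔ` and
`μ - ℕΔ` respectively (where `ℕS` denotes the additive submonoid generated by `S`),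
then `(f * g)|_{(λ+μ) - ℕJ} = (f|_{λ - ℕJ}) * (g|_{μ - ℕJ})`. -/
theorem restrict_mul_eq_restrict_mul_restrict {V : Type*} [AddCommGroup V] [Module ℝ V]
    (Δ : Finset V) (hΔ : LinearIndependent ℝ (fun x : (Δ : Set V) => (x : V)))
    (J : Set V) (hJ : J ⊆ Δ)
    (lam mu : V) (f g : AddMonoidAlgebra ℤ V)
    (hf : ∀ x ∈ f.coeff.support, ∃ ν ∈ AddSubmonoid.closure (Δ : Set V), x = lam - ν)
    (hg : ∀ x ∈ g.coeff.support, ∃ ν ∈ AddSubmonoid.closure (Δ : Set V), x = mu - ν) :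
    AddMonoidAlgebra.restrictSupport
        {x | ∃ ν ∈ AddSubmonoid.closure J, x = lam + mu - ν} (f * g) =
      AddMonoidAlgebra.restrictSupport {x | ∃ ν ∈ AddSubmonoid.closure J, x = lam - ν} f *
        AddMonoidAlgebra.restrictSupport {x | ∃ ν ∈ AddSubmonoid.closure J, x = mu - ν} g := by
  classical
  set S : Set V := {x | ∃ ν ∈ AddSubmonoid.closure J, x = lam + mu - ν} with hS
  set S1 : Set V := {x | ∃ ν ∈ AddSubmonoid.closure J, x = lam - ν} with hS1
  set S2 : Set V := {x | ∃ ν ∈ AddSubmonoid.closure J, x = mu - ν} with hS2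
  set fJ := AddMonoidAlgebra.restrictSupport S1 f with hfJ
  set gJ := AddMonoidAlgebra.restrictSupport S2 g with hgJ
  set f' : AddMonoidAlgebra ℤ V := AddMonoidAlgebra.ofCoeff (Finsupp.filter (fun x => ¬ x ∈ S1) f.coeff) with hf'
  set g' : AddMonoidAlgebra ℤ V := AddMonoidAlgebra.ofCoeff (Finsupp.filter (fun x => ¬ x ∈ S2) g.coeff) with hg'
  -- support facts
  have hfJs : ∀ x ∈ fJ.coeff.support, x ∈ f.coeff.support ∧ x ∈ S1 := by
    intro x hx
    rw [hfJ, AddMonoidAlgebra.restrictSupport, AddMonoidAlgebra.coeff_ofCoeff, Finsupp.support_filter,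
      Finset.mem_filter] at hx
    exact hx
  have hgJs : ∀ y ∈ gJ.coeff.support, y ∈ g.coeff.support ∧ y ∈ S2 := by
    intro y hy
    rw [hgJ, AddMonoidAlgebra.restrictSupport, AddMonoidAlgebra.coeff_ofCoeff, Finsupp.support_filter,
      Finset.mem_filter] at hy
    exact hy
  have hf's : ∀ x ∈ f'.coeff.support, x ∈ f.coeff.support ∧ x ∉ S1 := by
    intro x hx
    rw [hf', AddMonoidAlgebra.coeff_ofCoeff, Finsupp.support_filter, Finset.mem_filter] at hx
    exact hx
  have hg's : ∀ y ∈ g'.coeff.support, y ∈ g.coeff.support ∧ y ∉ S2 := by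
    intro y hy
    rw [hg', AddMonoidAlgebra.coeff_ofCoeff, Finsupp.support_filter, Finset.mem_filter] at hy
    exact hy
  -- decomposition
  have hfd : fJ + f' = f :=
    AddMonoidAlgebra.coeff_injective (Finsupp.filter_pos_add_filter_neg f.coeff _)
  have hgd : gJ + g' = g :=
    AddMonoidAlgebra.coeff_injective (Finsupp.filter_pos_add_filter_neg g.coeff _)
  -- the crucial cancellation argument
  have hkey : ∀ x ∈ f.coeff.support, ∀ y ∈ g.coeff.support, x + y ∈ S → x ∈ S1 ∧ y ∈ S2 := by
    intro x hx y hy hxy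
    obtain ⟨ν₁, hν₁, rfl⟩ := hf x hx
    obtain ⟨ν₂, hν₂, rfl⟩ := hg y hy
    obtain ⟨ν, hν, he⟩ := hxy
    have hsum : ν = ν₁ + ν₂ := by
      have : lam + mu - ν = lam + mu - (ν₁ + ν₂) := by
        rw [← he]; abel
      exact sub_right_injective this
    obtain ⟨h1, h2⟩ := key_split Δ hΔ J hJ hν₁ hν₂ (hsum ▸ hν)
    exact ⟨⟨ν₁, h1, rfl⟩, ⟨ν₂, h2, rfl⟩⟩
  -- assemble
  have e1 : AddMonoidAlgebra.restrictSupport S (fJ * gJ) = fJ * gJ := by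
    apply restrictSupport_mul_eq_self
    intro z hz
    obtain ⟨x, hx, y, hy, hxy⟩ := Finset.mem_add.mp (AddMonoidAlgebra.support_coeff_mul_subset fJ gJ hz)
    obtain ⟨ν₁, hν₁, hx1⟩ := (hfJs x hx).2
    obtain ⟨ν₂, hν₂, hy1⟩ := (hgJs y hy).2
    refine hxy ▸ ⟨ν₁ + ν₂, add_mem hν₁ hν₂, ?_⟩
    rw [hx1, hy1]; abel
  have e2 : AddMonoidAlgebra.restrictSupport S (fJ * g') = 0 := by
    apply restrictSupport_mul_eq_zero
    intro x hx y hy hxy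
    exact (hg's y hy).2 (hkey x (hfJs x hx).1 y (hg's y hy).1 hxy).2
  have e3 : AddMonoidAlgebra.restrictSupport S (f' * g) = 0 := by
    apply restrictSupport_mul_eq_zero
    intro x hx y hy hxy
    exact (hf's x hx).2 (hkey x (hf's x hx).1 y hy hxy).1
  have hdist : f * g = fJ * gJ + fJ * g' + f' * g := by
    rw [← hfd, ← hgd]; ring
  rw [hdist]
  show AddMonoidAlgebra.ofCoeff (Finsupp.filter (· ∈ S) (fJ * gJ + fJ * g' + f' * g).coeff) = fJ * gJ
  rw [AddMonoidAlgebra.coeff_add, AddMonoidAlgebra.coeff_add, Finsupp.filter_add, Finsupp.filter_add,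
    AddMonoidAlgebra.ofCoeff_add, AddMonoidAlgebra.ofCoeff_add]
  show AddMonoidAlgebra.restrictSupport S (fJ * gJ) +
      AddMonoidAlgebra.restrictSupport S (fJ * g') +
      AddMonoidAlgebra.restrictSupport S (f' * g) = fJ * gJ
  rw [e1, e2, e3, add_zero, add_zero]
end

section
/- Fix an integer n ≥ 3 and let v ∈ ℤ^n be the vector with v_1 = 2n−2 and v_s = 2(n−s)+1 for 2 ≤ s ≤ n. For all indices 1 ≤ i < j ≤ n and every integer m with 1 ≤ m ≤ (j−i) − 1, the vector u = v − 2m(e_i − e_j) has two indices s < t, with i < s and t ≤ j, such that u_s = u_t. -/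
/-- Case 2 of the proof of Proposition 6.6.  Let `n ≥ 3` and let `v ∈ ℤ^n` be the
vector with `v_1 = 2n-2` and `v_s = 2(n-s)+1` for `2 ≤ s ≤ n` (in `Fin n` indexing,
paper index `s` corresponds to the coordinate `s-1`).  For all paper indices
`1 ≤ i < j ≤ n` and every integer `m` with `1 ≤ m ≤ (j-i)-1`, the vector
`u = v - 2m(e_i - e_j)` has two indices `s < t`, with `i < s` and `t ≤ j`, such
that `u_s = u_t`. -/
theorem case2_eps_sub (n : ℕ) (hn : 3 ≤ n) (v : Fin n → ℤ)
    (hv : ∀ s : Fin n,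
      v s = if (s : ℕ) = 0 then 2 * (n : ℤ) - 2 else 2 * ((n : ℤ) - ((s : ℕ) + 1)) + 1)
    (i j : Fin n) (hij : i < j)
    (m : ℤ) (hm1 : 1 ≤ m)
    (hm2 : m ≤ ((j : ℕ) : ℤ) - ((i : ℕ) : ℤ) - 1) :
    ∃ s t : Fin n, s < t ∧ i < s ∧ t ≤ j ∧
      ((v - (2 * m) • (Pi.single i (1 : ℤ) - Pi.single j 1) : Fin n → ℤ)) s =
        ((v - (2 * m) • (Pi.single i (1 : ℤ) - Pi.single j 1) : Fin n → ℤ)) t := by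
  set k := m.toNat with hkdef
  have hkm : (k : ℤ) = m := Int.toNat_of_nonneg (by linarith)
  have hk1 : 1 ≤ k := by omega
  have hk2 : k + (i : ℕ) + 1 ≤ (j : ℕ) := by omega
  have hjn : (j : ℕ) < n := j.isLt
  refine ⟨⟨(j : ℕ) - k, by omega⟩, j, ?_, ?_, le_refl _, ?_⟩
  · simp [Fin.lt_def]; omega
  · simp [Fin.lt_def]; omega
  · have hsi : (⟨(j : ℕ) - k, by omega⟩ : Fin n) ≠ i := by
      simp [Fin.ext_iff]; omega
    have hsj : (⟨(j : ℕ) - k, by omega⟩ : Fin n) ≠ j := by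
      simp [Fin.ext_iff]; omega
    have hji : j ≠ i := (Fin.ne_of_gt hij)
    have h0 : ¬ ((j : ℕ) - k = 0) := by omega
    have h0' : ¬ ((j : ℕ) = 0) := by omega
    simp only [Pi.sub_apply, Pi.smul_apply, smul_eq_mul, Pi.single_apply,
      if_neg hsi, if_neg hsj, if_neg hji, if_pos rfl, hv, Fin.val_mk,
      h0, h0', if_false, if_true]
    have : (((j : ℕ) - k : ℕ) : ℤ) = (j : ℕ) - (k : ℤ) := by
      push_cast [Nat.cast_sub (by omega : k ≤ (j : ℕ))]; ring
    rw [this, hkm]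
    ring
end

section
/- Fix an integer n ≥ 3 and let v ∈ ℤ^n be the vector with v_1 = 2n−2 and v_s = 2(n−s)+1 for 2 ≤ s ≤ n. For every index i with 2 ≤ i ≤ n and every integer m with 1 ≤ m ≤ 2(n−i), the vector u = v − 2m·e_i has two indices s < t with |u_s| = |u_t|. -/
/-- Case 3 of the proof of Proposition 6.6.  Let `n ≥ 3` and let `v ∈ ℤ^n` be the
vector with `v_1 = 2n-2` and `v_s = 2(n-s)+1` for `2 ≤ s ≤ n` (in `Fin n` indexing,
paper index `s` corresponds to the coordinate `s-1`).  For every paper index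
`2 ≤ i ≤ n` and every integer `m` with `1 ≤ m ≤ 2(n-i)`, the vector `u = v - 2m·e_i`
has two indices `s < t` with `|u_s| = |u_t|`. -/
theorem case3_eps (n : ℕ) (hn : 3 ≤ n) (v : Fin n → ℤ)
    (hv : ∀ s : Fin n,
      v s = if (s : ℕ) = 0 then 2 * (n : ℤ) - 2 else 2 * ((n : ℤ) - ((s : ℕ) + 1)) + 1)
    (i : Fin n) (hi : 1 ≤ (i : ℕ))
    (m : ℤ) (hm1 : 1 ≤ m)
    (hm2 : m ≤ 2 * ((n : ℤ) - ((i : ℕ) + 1))) :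
    ∃ s t : Fin n, s < t ∧
      |((v - (2 * m) • Pi.single i (1 : ℤ) : Fin n → ℤ)) s| =
        |((v - (2 * m) • Pi.single i (1 : ℤ) : Fin n → ℤ)) t| := by
  have hin : (i : ℕ) < n := i.isLt
  have hmn0 : (0 : ℤ) ≤ m := by omega
  have hmZ : ((m.toNat : ℤ)) = m := Int.toNat_of_nonneg hmn0
  set mn : ℕ := m.toNat with hmndef
  have hi1 : (i : ℕ) + 1 < n := by omega
  have hm1' : 1 ≤ mn := by omega
  have hm2' : mn ≤ 2 * (n - (i : ℕ) - 1) := by omega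
  set jn : ℕ := if mn ≤ n - (i : ℕ) - 1 then (i : ℕ) + mn else 2 * n - (i : ℕ) - 1 - mn
    with hjdef
  have hj1 : (i : ℕ) < jn := by
    rw [hjdef]; split <;> omega
  have hj2 : jn < n := by
    rw [hjdef]; split <;> omega
  refine ⟨i, ⟨jn, hj2⟩, ?_, ?_⟩
  · exact Fin.lt_def.mpr hj1
  · have hne : (⟨jn, hj2⟩ : Fin n) ≠ i := by
      intro h
      have : jn = (i : ℕ) := by simpa using congrArg Fin.val h
      omega
    simp only [Pi.sub_apply, Pi.smul_apply, Pi.single_eq_same, smul_eq_mul,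
      Pi.single_eq_of_ne hne, mul_one, mul_zero, sub_zero]
    rw [hv i, hv ⟨jn, hj2⟩]
    have hi0 : ¬ ((i : ℕ) = 0) := by omega
    have hj0 : ¬ (((⟨jn, hj2⟩ : Fin n) : ℕ) = 0) := by simp; omega
    rw [if_neg hi0, if_neg hj0]
    rw [abs_eq_abs]
    simp only [Fin.val_mk]
    rw [hjdef]
    split <;> omega
end

section
/- Fix an integer n ≥ 3 and let v ∈ ℤ^n be the vector with v_1 = 2n−2 and v_s = 2(n−s)+1 for 2 ≤ s ≤ n. For every index j with 2 ≤ j ≤ n and every integer m with 1 ≤ m ≤ (n−1) + (n−j) and m ≠ 2(n−j) + 1, the vector u = v − 2m(e_1 + e_j) has two indices s < t with |u_s| = |u_t|. -/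
/-- The main combinatorial claim of Case 5 of the proof of Proposition 6.6.
Let `n ≥ 3` and let `v ∈ ℤ^n` be the vector with `v_1 = 2n-2` and `v_s = 2(n-s)+1`
for `2 ≤ s ≤ n` (in `Fin n` indexing, paper index `s` corresponds to the coordinate
`s-1`).  For every paper index `2 ≤ j ≤ n` and every integer `m` with
`1 ≤ m ≤ (n-1)+(n-j)` and `m ≠ 2(n-j)+1`, the vector `u = v - 2m(e_1 + e_j)` has two
indices `s < t` with `|u_s| = |u_t|`. -/
theorem case5_eps1_add (n : ℕ) (hn : 3 ≤ n) (v : Fin n → ℤ)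
    (hv : ∀ s : Fin n,
      v s = if (s : ℕ) = 0 then 2 * (n : ℤ) - 2 else 2 * ((n : ℤ) - ((s : ℕ) + 1)) + 1)
    (j : Fin n) (hj : 1 ≤ (j : ℕ))
    (m : ℤ) (hm1 : 1 ≤ m)
    (hm2 : m ≤ ((n : ℤ) - 1) + ((n : ℤ) - ((j : ℕ) + 1)))
    (hm3 : m ≠ 2 * ((n : ℤ) - ((j : ℕ) + 1)) + 1) :
    ∃ s t : Fin n, s < t ∧
      |((v - (2 * m) • (Pi.single (⟨0, by omega⟩ : Fin n) (1 : ℤ) + Pi.single j 1) : Fin n → ℤ)) s| =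
        |((v - (2 * m) • (Pi.single (⟨0, by omega⟩ : Fin n) (1 : ℤ) + Pi.single j 1) : Fin n → ℤ)) t| := by
  have hJ : (j : ℕ) < n := j.isLt
  set J : ℕ := (j : ℕ) with hJdef
  set c : ℤ := 2 * (n : ℤ) - 2 * J - 1 - 2 * m with hc
  obtain ⟨k, hk⟩ : ∃ k : ℤ, |c| = 2 * k + 1 := by
    rcases abs_cases c with ⟨h1, h2⟩ | ⟨h1, h2⟩
    · exact ⟨(n : ℤ) - J - 1 - m, by omega⟩
    · exact ⟨m - (n : ℤ) + J, by omega⟩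
  have hb : |c| ≤ 2 * (n : ℤ) - 3 ∧ |c| ≠ 2 * (n : ℤ) - 2 * J - 1 := by
    rcases abs_cases c with ⟨h1, h2⟩ | ⟨h1, h2⟩ <;> constructor <;> omega
  have ha0 : 0 ≤ |c| := abs_nonneg c
  set S : ℕ := ((n : ℤ) - 1 - k).toNat with hSdef
  have hS : (S : ℤ) = (n : ℤ) - 1 - k := Int.toNat_of_nonneg (by omega)
  have hS1 : 1 ≤ S := by omega
  have hSn : S < n := by omega
  have hSJ : S ≠ J := by
    intro h
    apply hb.2
    omega
  set sfin : Fin n := ⟨S, hSn⟩ with hsfin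
  set e0 : Fin n := ⟨0, by omega⟩ with he0
  set u : Fin n → ℤ :=
    (v - (2 * m) • (Pi.single e0 (1 : ℤ) + Pi.single j 1) : Fin n → ℤ) with hu
  have hsne0 : sfin ≠ e0 := by simp [Fin.ext_iff, hsfin, he0]; omega
  have hsnej : sfin ≠ j := by simp [Fin.ext_iff, hsfin]; omega
  have hjne0 : j ≠ e0 := by simp [Fin.ext_iff, he0]; omega
  have hus : u sfin = 2 * (n : ℤ) - 2 * S - 1 := by
    simp [hu, Pi.single_eq_of_ne hsne0, Pi.single_eq_of_ne hsnej, hv sfin]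
    rw [if_neg (show ¬ ((sfin : ℕ) = 0) by change ¬ S = 0; omega)]
    show 2 * ((n : ℤ) - (((S : ℕ) : ℤ) + 1)) + 1 = _
    omega
  have huj : u j = c := by
    simp [hu, Pi.single_eq_of_ne hjne0, hv j]
    rw [if_neg (by omega)]
    omega
  have habs_s : |u sfin| = |c| := by
    rw [hus]
    have : 2 * (n : ℤ) - 2 * S - 1 = |c| := by omega
    rw [this, abs_abs]
  have habs_j : |u j| = |c| := by rw [huj]
  rcases lt_trichotomy S J with h | h | h
  · exact ⟨sfin, j, by simpa [Fin.lt_def, hsfin] using h, by rw [habs_s, habs_j]⟩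
  · exact absurd h hSJ
  · exact ⟨j, sfin, by simpa [Fin.lt_def, hsfin] using h, by rw [habs_s, habs_j]⟩
end

section
/- Fix an integer n ≥ 3 and let v ∈ ℤ^n be the vector with v_1 = 2n−2 and v_s = 2(n−s)+1 for 2 ≤ s ≤ n. Let α ∈ ℤ^n be a positive root of B_n in the ε-basis, i.e. α = e_i + e_j with 1 ≤ i < j ≤ n, or α = e_i − e_j with 1 ≤ i < j ≤ n, or α = e_i with 1 ≤ i ≤ n, and set ⟨v, α∨⟩ = v_i + v_j, v_i − v_j, and 2v_i in the three respective cases. Let m be an integer with 1 ≤ m and 2m < ⟨v, α∨⟩, and assume that it is NOT the case that α = e_1, and NOT the case that α = e_1 + e_j with m = 2(n−j)+1 and 2j ≠ n+2. Then the vector u = v − 2mα either has two indices s < t with |u_s| = |u_t|, or has some coordinate equal to 0. -/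
private lemma fin_ne_of_val_ne' {n : ℕ} {a b : Fin n} (h : (a:ℕ) ≠ (b:ℕ)) : a ≠ b :=
  fun hab => h (congrArg Fin.val hab)

private lemma pair_helper {n : ℕ} (u : Fin n → ℤ) {s t : Fin n} (hst : s ≠ t)
    (h : |u s| = |u t|) :
    (∃ a b : Fin n, a < b ∧ |u a| = |u b|) := by
  rcases lt_or_gt_of_ne hst with h' | h'
  · exact ⟨s, t, h', h⟩
  · exact ⟨t, s, h', h.symm⟩

private lemma find_idx (n : ℕ) (x : ℤ) (hpar : x % 2 = 1)
    (h1 : 1 ≤ x) (h2 : x ≤ 2*(n:ℤ) - 3) :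
    ∃ t : Fin n, 1 ≤ (t:ℕ) ∧ x = 2*((n:ℤ) - ((t:ℕ)+1)) + 1 := by
  have hn : 2 ≤ n := by omega
  obtain ⟨c, hc⟩ : ∃ c : ℕ, x = 2*(c:ℤ)+1 := ⟨(x/2).toNat, by omega⟩
  have hcb : c ≤ n - 2 := by omega
  refine ⟨⟨n - 2 - c + 1, by omega⟩, ?_, ?_⟩
  · show 1 ≤ n - 2 - c + 1; omega
  · show x = 2*((n:ℤ) - (((n - 2 - c + 1 : ℕ) : ℤ) + 1)) + 1
    omega


/-- Aggregation of Cases 1, 2, 3 and 5 of the proof of Proposition 6.6.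
Let `n ≥ 3` and let `v ∈ ℤ^n` be the vector with `v_1 = 2n-2` and `v_s = 2(n-s)+1`
for `2 ≤ s ≤ n` (in `Fin n` indexing, paper index `s` corresponds to the coordinate
`s-1`).  Let `α` be a positive root of `B_n` in the `ε`-basis, i.e. `α = e_i + e_j`
or `e_i - e_j` with `i < j`, or `α = e_i`, with `⟨v, α∨⟩` equal to `v_i + v_j`,
`v_i - v_j`, `2 v_i` in the three respective cases.  Let `m` be an integer with
`1 ≤ m` and `2m < ⟨v, α∨⟩`, and assume `α ≠ e_1`, and that it is not the case that
`α = e_1 + e_j` with `m = 2(n-j)+1` and `2j ≠ n+2`.  Then `u = v - 2mα` either has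
two indices `s < t` with `|u_s| = |u_t|`, or has some coordinate equal to `0`. -/
theorem jantzen_sum_terms_vanish (n : ℕ) (hn : 3 ≤ n) (v : Fin n → ℤ)
    (hv : ∀ s : Fin n,
      v s = if (s : ℕ) = 0 then 2 * (n : ℤ) - 2 else 2 * ((n : ℤ) - ((s : ℕ) + 1)) + 1)
    (α : Fin n → ℤ) (m : ℤ) (hm1 : 1 ≤ m)
    (hroot :
      (∃ i j : Fin n, i < j ∧ α = Pi.single i (1 : ℤ) + Pi.single j 1 ∧
        2 * m < v i + v j) ∨
      (∃ i j : Fin n, i < j ∧ α = Pi.single i (1 : ℤ) - Pi.single j 1 ∧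
        2 * m < v i - v j) ∨
      (∃ i : Fin n, α = Pi.single i (1 : ℤ) ∧ 2 * m < 2 * v i))
    (hne1 : α ≠ Pi.single (⟨0, by omega⟩ : Fin n) (1 : ℤ))
    (hne2 : ¬ ∃ j : Fin n, 1 ≤ (j : ℕ) ∧
      α = Pi.single (⟨0, by omega⟩ : Fin n) (1 : ℤ) + Pi.single j 1 ∧
      m = 2 * ((n : ℤ) - ((j : ℕ) + 1)) + 1 ∧
      2 * (((j : ℕ) : ℤ) + 1) ≠ (n : ℤ) + 2) :
    (∃ s t : Fin n, s < t ∧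
      |((v - (2 * m) • α : Fin n → ℤ)) s| = |((v - (2 * m) • α : Fin n → ℤ)) t|) ∨
    (∃ s : Fin n, ((v - (2 * m) • α : Fin n → ℤ)) s = 0) := by
  simp only [Pi.sub_apply, Pi.smul_apply, smul_eq_mul]
  rcases hroot with ⟨i, j, hij, hα, hmlt⟩ | ⟨i, j, hij, hα, hmlt⟩ | ⟨i, hα, hmlt⟩
  · -- CASE α = e_i + e_j
    have hαi : α i = 1 := by
      rw [hα, Pi.add_apply, Pi.single_eq_same, Pi.single_eq_of_ne hij.ne]; ring
    have hαj : α j = 1 := by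
      rw [hα, Pi.add_apply, Pi.single_eq_same, Pi.single_eq_of_ne hij.ne']; ring
    have hαt : ∀ t : Fin n, t ≠ i → t ≠ j → α t = 0 := by
      intro t hti htj
      rw [hα, Pi.add_apply, Pi.single_eq_of_ne hti, Pi.single_eq_of_ne htj]; ring
    have hIJ : (i:ℕ) < (j:ℕ) := hij
    have hJn : (j:ℕ) < n := j.isLt
    have hJ1 : 1 ≤ (j:ℕ) := by omega
    have hvj : v j = 2*((n:ℤ) - ((j:ℕ)+1)) + 1 := by
      rw [hv j, if_neg (by omega)]
    have hUj : v j - 2*m*α j = 2*((n:ℤ) - ((j:ℕ)+1)) + 1 - 2*m := by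
      rw [hαj, hvj]; ring
    rcases Nat.eq_zero_or_pos (i:ℕ) with hI0 | hI1
    · -- i is index 0
      have hi0 : i = ⟨0, by omega⟩ := Fin.ext hI0
      have hvi : v i = 2*(n:ℤ) - 2 := by rw [hv i, if_pos hI0]
      have hUi : v i - 2*m*α i = 2*(n:ℤ) - 2 - 2*m := by rw [hαi, hvi]; ring
      have hmub : 2*m < v i + v j := hmlt
      obtain ⟨A, hA1, hA2, hA3, hA4⟩ :
          ∃ A : ℤ, |v j - 2*m*α j| = A ∧ A % 2 = 1 ∧ 1 ≤ A ∧ A ≤ 2*(n:ℤ)-3 := by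
        rcases abs_cases (v j - 2*m*α j) with ⟨h1, h2⟩ | ⟨h1, h2⟩ <;>
          exact ⟨_, h1, by omega, by omega, by omega⟩
      obtain ⟨t, ht1, ht2⟩ := find_idx n A hA2 hA3 hA4
      have hvt : v t = 2*((n:ℤ) - ((t:ℕ)+1)) + 1 := by
        rw [hv t, if_neg (by omega)]
      by_cases htj : (t:ℕ) = (j:ℕ)
      · -- forces u_j = -v_j, so m = v_j, then hne2 forces n = 2j, so u_0 = 0
        have hm : m = 2*((n:ℤ) - ((j:ℕ)+1)) + 1 := by
          rcases (abs_eq (show (0:ℤ) ≤ A by omega)).mp hA1 with h | h <;> omega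
        have hn2 : 2*(((j:ℕ):ℤ)+1) = (n:ℤ)+2 := by
          by_contra hc
          exact hne2 ⟨j, hJ1, by rw [hα, hi0], hm, hc⟩
        exact Or.inr ⟨i, by omega⟩
      · have hti : (t:ℕ) ≠ (i:ℕ) := by omega
        refine Or.inl (pair_helper (fun s => v s - 2*m*α s)
          (fin_ne_of_val_ne' htj) ?_)
        show |v t - 2*m*α t| = |v j - 2*m*α j|
        rw [hαt t (fin_ne_of_val_ne' hti) (fin_ne_of_val_ne' htj), mul_zero, sub_zero,
          hA1, abs_of_nonneg (by omega)]
        omega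
    · -- i ≥ 1
      have hvi : v i = 2*((n:ℤ) - ((i:ℕ)+1)) + 1 := by
        rw [hv i, if_neg (by omega)]
      have hUi : v i - 2*m*α i = 2*((n:ℤ) - ((i:ℕ)+1)) + 1 - 2*m := by
        rw [hαi, hvi]; ring
      by_cases heq : |v i - 2*m*α i| = |v j - 2*m*α j|
      · exact Or.inl ⟨i, j, hij, heq⟩
      obtain ⟨A, hA1, hA2, hA3, hA4, hA5⟩ :
          ∃ A : ℤ, |v j - 2*m*α j| = A ∧ A % 2 = 1 ∧ 1 ≤ A ∧ A ≤ 2*(n:ℤ)-3 ∧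
            A ≤ 2*((n:ℤ) - ((i:ℕ)+1)) := by
        rcases abs_cases (v j - 2*m*α j) with ⟨h1, h2⟩ | ⟨h1, h2⟩ <;>
          exact ⟨_, h1, by omega, by omega, by omega, by omega⟩
      obtain ⟨t, ht1, ht2⟩ := find_idx n A hA2 hA3 hA4
      have hvt : v t = 2*((n:ℤ) - ((t:ℕ)+1)) + 1 := by
        rw [hv t, if_neg (by omega)]
      have hti : (t:ℕ) ≠ (i:ℕ) := by omega
      by_cases htj : (t:ℕ) = (j:ℕ)
      · -- u_j = -v_j, m = v_j; now work with u_i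
        have hm : m = 2*((n:ℤ) - ((j:ℕ)+1)) + 1 := by
          rcases (abs_eq (show (0:ℤ) ≤ A by omega)).mp hA1 with h | h <;> omega
        obtain ⟨B, hB1, hB2, hB3, hB4, hB5, hB6⟩ :
            ∃ B : ℤ, |v i - 2*m*α i| = B ∧ B % 2 = 1 ∧ 1 ≤ B ∧ B ≤ 2*(n:ℤ)-3 ∧
              B ≤ 2*((n:ℤ) - ((i:ℕ)+1)) ∧ B ≠ A := by
          rcases abs_cases (v i - 2*m*α i) with ⟨h1, h2⟩ | ⟨h1, h2⟩ <;>
            exact ⟨_, h1, by omega, by omega, by omega, by omega, by omega⟩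
        obtain ⟨t', ht'1, ht'2⟩ := find_idx n B hB2 hB3 hB4
        have hvt' : v t' = 2*((n:ℤ) - ((t':ℕ)+1)) + 1 := by
          rw [hv t', if_neg (by omega)]
        have ht'i : (t':ℕ) ≠ (i:ℕ) := by omega
        have ht'j : (t':ℕ) ≠ (j:ℕ) := by omega
        refine Or.inl (pair_helper (fun s => v s - 2*m*α s)
          (fin_ne_of_val_ne' ht'i) ?_)
        show |v t' - 2*m*α t'| = |v i - 2*m*α i|
        rw [hαt t' (fin_ne_of_val_ne' ht'i) (fin_ne_of_val_ne' ht'j), mul_zero, sub_zero,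
          hB1, abs_of_nonneg (by omega)]
        omega
      · refine Or.inl (pair_helper (fun s => v s - 2*m*α s)
          (fin_ne_of_val_ne' htj) ?_)
        show |v t - 2*m*α t| = |v j - 2*m*α j|
        rw [hαt t (fin_ne_of_val_ne' hti) (fin_ne_of_val_ne' htj), mul_zero, sub_zero,
          hA1, abs_of_nonneg (by omega)]
        omega
  · -- CASE α = e_i - e_j
    have hαi : α i = 1 := by
      rw [hα, Pi.sub_apply, Pi.single_eq_same, Pi.single_eq_of_ne hij.ne]; ring
    have hαj : α j = -1 := by
      rw [hα, Pi.sub_apply, Pi.single_eq_same, Pi.single_eq_of_ne hij.ne']; ring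
    have hαt : ∀ t : Fin n, t ≠ i → t ≠ j → α t = 0 := by
      intro t hti htj
      rw [hα, Pi.sub_apply, Pi.single_eq_of_ne hti, Pi.single_eq_of_ne htj]; ring
    have hIJ : (i:ℕ) < (j:ℕ) := hij
    have hJn : (j:ℕ) < n := j.isLt
    have hJ1 : 1 ≤ (j:ℕ) := by omega
    have hvj : v j = 2*((n:ℤ) - ((j:ℕ)+1)) + 1 := by
      rw [hv j, if_neg (by omega)]
    have hUj : v j - 2*m*α j = 2*((n:ℤ) - ((j:ℕ)+1)) + 1 + 2*m := by
      rw [hαj, hvj]; ring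
    rcases Nat.eq_zero_or_pos (i:ℕ) with hI0 | hI1
    · -- i is index 0: use u_j = v_j + 2m
      have hvi : v i = 2*(n:ℤ) - 2 := by rw [hv i, if_pos hI0]
      have hA2 : (v j - 2*m*α j) % 2 = 1 := by omega
      have hA3 : 1 ≤ v j - 2*m*α j := by omega
      have hA4 : v j - 2*m*α j ≤ 2*(n:ℤ)-3 := by omega
      obtain ⟨t, ht1, ht2⟩ := find_idx n _ hA2 hA3 hA4
      have hvt : v t = 2*((n:ℤ) - ((t:ℕ)+1)) + 1 := by
        rw [hv t, if_neg (by omega)]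
      have hti : (t:ℕ) ≠ (i:ℕ) := by omega
      have htj : (t:ℕ) ≠ (j:ℕ) := by omega
      refine Or.inl (pair_helper (fun s => v s - 2*m*α s)
        (fin_ne_of_val_ne' htj) ?_)
      show |v t - 2*m*α t| = |v j - 2*m*α j|
      rw [hαt t (fin_ne_of_val_ne' hti) (fin_ne_of_val_ne' htj), mul_zero, sub_zero,
        abs_of_nonneg (by omega), abs_of_nonneg (by omega)]
      omega
    · -- i ≥ 1: use u_i = v_i - 2m, which lies strictly between v_j and v_i
      have hvi : v i = 2*((n:ℤ) - ((i:ℕ)+1)) + 1 := by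
        rw [hv i, if_neg (by omega)]
      have hUi : v i - 2*m*α i = 2*((n:ℤ) - ((i:ℕ)+1)) + 1 - 2*m := by
        rw [hαi, hvi]; ring
      have hA2 : (v i - 2*m*α i) % 2 = 1 := by omega
      have hA3 : 1 ≤ v i - 2*m*α i := by omega
      have hA4 : v i - 2*m*α i ≤ 2*(n:ℤ)-3 := by omega
      obtain ⟨t, ht1, ht2⟩ := find_idx n _ hA2 hA3 hA4
      have hvt : v t = 2*((n:ℤ) - ((t:ℕ)+1)) + 1 := by
        rw [hv t, if_neg (by omega)]
      have hti : (t:ℕ) ≠ (i:ℕ) := by omega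
      have htj : (t:ℕ) ≠ (j:ℕ) := by omega
      refine Or.inl (pair_helper (fun s => v s - 2*m*α s)
        (fin_ne_of_val_ne' hti).symm ?_)
      show |v i - 2*m*α i| = |v t - 2*m*α t|
      rw [hαt t (fin_ne_of_val_ne' hti) (fin_ne_of_val_ne' htj), mul_zero, sub_zero,
        abs_of_nonneg (by omega), abs_of_nonneg (by omega)]
      omega
  · -- CASE α = e_i (short root)
    have hαi : α i = 1 := by rw [hα, Pi.single_eq_same]
    have hαt : ∀ t : Fin n, t ≠ i → α t = 0 := by
      intro t hti
      rw [hα, Pi.single_eq_of_ne hti]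
    have hI1 : 1 ≤ (i:ℕ) := by
      rcases Nat.eq_zero_or_pos (i:ℕ) with h0 | h1
      · have hi0 : i = ⟨0, by omega⟩ := Fin.ext h0
        exact absurd (by rw [hα, hi0]) hne1
      · exact h1
    have hIn : (i:ℕ) < n := i.isLt
    have hvi : v i = 2*((n:ℤ) - ((i:ℕ)+1)) + 1 := by
      rw [hv i, if_neg (by omega)]
    have hUi : v i - 2*m*α i = 2*((n:ℤ) - ((i:ℕ)+1)) + 1 - 2*m := by
      rw [hαi, hvi]; ring
    obtain ⟨A, hA1, hA2, hA3, hA4, hA5⟩ :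
        ∃ A : ℤ, |v i - 2*m*α i| = A ∧ A % 2 = 1 ∧ 1 ≤ A ∧ A ≤ 2*(n:ℤ)-3 ∧
          A ≤ 2*((n:ℤ) - ((i:ℕ)+1)) := by
      rcases abs_cases (v i - 2*m*α i) with ⟨h1, h2⟩ | ⟨h1, h2⟩ <;>
        exact ⟨_, h1, by omega, by omega, by omega, by omega⟩
    obtain ⟨t, ht1, ht2⟩ := find_idx n A hA2 hA3 hA4
    have hvt : v t = 2*((n:ℤ) - ((t:ℕ)+1)) + 1 := by
      rw [hv t, if_neg (by omega)]
    have hti : (t:ℕ) ≠ (i:ℕ) := by omega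
    refine Or.inl (pair_helper (fun s => v s - 2*m*α s)
      (fin_ne_of_val_ne' hti) ?_)
    show |v t - 2*m*α t| = |v i - 2*m*α i|
    rw [hαt t (fin_ne_of_val_ne' hti), mul_zero, sub_zero,
      hA1, abs_of_nonneg (by omega)]
    omega
end
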